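/- arXiv:1902.01558 — 2 statements merged into one kernel-verified Lean document; each statement's English description precedes it below -/
import Mathlib

section
/- The map σ̂ on sl(3,ℂ) defined by σ̂(X) = -P X^T P⁻¹, where P = diag(ε²,ε⁴,-1)·P₀ with ε = e^{iπ/3} and P₀ the matrix with rows (0,1,0),(1,0,0),(0,0,-1), is a Lie algebra automorphism of order exactly 6. -/
open Matrix Complex

noncomputable section

/-- `ε = e^{iπ/3}`, a primitive sixth root of unity. -/
def ε : ℂ := Complex.exp (Real.pi * Complex.I / 3)

def P₀ : Matrix (Fin 3) (Fin 3) ℂ := !![0, 1, 0; 1, 0, 0; 0, 0, -1]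

def Pmat : Matrix (Fin 3) (Fin 3) ℂ := Matrix.diagonal ![ε ^ 2, ε ^ 4, -1] * P₀

/-- `σ̂(X) = -P Xᵀ P⁻¹`. -/
def sigmaHat (X : Matrix (Fin 3) (Fin 3) ℂ) : Matrix (Fin 3) (Fin 3) ℂ :=
  -(Pmat * Xᵀ * Pmat⁻¹)


/-! Since `ε³ = -1`, the matrix `P` is an involution, so `σ̂ X = -P Xᵀ P`: an anti-automorphism of
the matrix algebra composed with negation, hence a Lie algebra automorphism preserving the trace
up to sign. Its square is conjugation by the diagonal matrix `P Pᵀ = diag(ε⁴, ε², 1)`, whose cube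
is `1`, so `σ̂⁶ = id`; the elementary matrix `E₀₁` is an eigenvector of `σ̂` with eigenvalue `ε`,
a primitive sixth root of unity, so no smaller positive power of `σ̂` is the identity. -/

theorem Function.bijective_of_iterate_succ_eq_id {α : Type*} {f : α → α} {n : ℕ}
    (h : f^[n + 1] = id) : Function.Bijective f :=
  ⟨.of_comp (f := f^[n]) (by rw [← Function.iterate_succ, h]; exact Function.injective_id),
    .of_comp (g := f^[n]) (by rw [← Function.iterate_succ', h]; exact Function.surjective_id)⟩

theorem Function.iterate_apply_of_apply_eq_smul {M A : Type*} [Monoid M] [MulAction M A]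
    {f : A → A} (hf : ∀ (c : M) (x : A), f (c • x) = c • f x) {c : M} {v : A}
    (hv : f v = c • v) (n : ℕ) : f^[n] v = c ^ n • v := by
  induction n with
  | zero => simp
  | succ n ih => rw [Function.iterate_succ_apply', ih, hf, hv, smul_smul, pow_succ]

theorem Function.iterate_mul_mul_apply {M : Type*} [Monoid M] (d e x : M) (k : ℕ) :
    (fun y => d * y * e)^[k] x = d ^ k * x * e ^ k := by
  induction k with
  | zero => simp
  | succ k ih => rw [Function.iterate_succ_apply', ih, pow_succ', pow_succ]; simp only [mul_assoc]

section NegTransposeConj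

variable {n R : Type*} [Fintype n] [CommRing R] {P : Matrix n n R}

theorem neg_conj_transpose_commutator [DecidableEq n] (hP : P * P = 1) (X Y : Matrix n n R) :
    -(P * (X * Y - Y * X)ᵀ * P) =
      -(P * Xᵀ * P) * -(P * Yᵀ * P) - -(P * Yᵀ * P) * -(P * Xᵀ * P) := by
  have conj_mul_conj : ∀ A B : Matrix n n R, P * Aᵀ * P * (P * Bᵀ * P) = P * (B * A)ᵀ * P := by
    intro A B
    calc P * Aᵀ * P * (P * Bᵀ * P) = P * Aᵀ * (P * P) * Bᵀ * P := by simp only [Matrix.mul_assoc]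
      _ = P * (B * A)ᵀ * P := by rw [hP, Matrix.mul_one, transpose_mul, Matrix.mul_assoc P]
  rw [neg_mul_neg, neg_mul_neg, conj_mul_conj, conj_mul_conj, transpose_sub, Matrix.mul_sub,
    Matrix.sub_mul]
  abel

theorem trace_conj_transpose [DecidableEq n] (hP : P * P = 1) (X : Matrix n n R) :
    (P * Xᵀ * P).trace = X.trace := by
  rw [trace_mul_cycle, hP, Matrix.one_mul, trace_transpose]

theorem neg_conj_transpose_neg_conj_transpose (X : Matrix n n R) :
    -(P * (-(P * Xᵀ * P))ᵀ * P) = P * Pᵀ * X * (Pᵀ * P) := by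
  simp only [transpose_neg, transpose_mul, transpose_transpose, Matrix.mul_neg, Matrix.neg_mul,
    neg_neg, Matrix.mul_assoc]

end NegTransposeConj

theorem ε_isPrimitiveRoot : IsPrimitiveRoot ε 6 := by
  convert Complex.isPrimitiveRoot_exp 6 (by norm_num) using 1
  rw [ε]
  ring_nf

theorem ε_pow_three : ε ^ 3 = -1 :=
  (ε_isPrimitiveRoot.pow_of_dvd (p := 3) (by norm_num) (by norm_num)).eq_neg_one_of_two_right

theorem Pmat_eq : Pmat = !![0, ε ^ 2, 0; ε ^ 4, 0, 0; 0, 0, 1] := by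
  ext i j
  fin_cases i <;> fin_cases j <;> simp [Pmat, P₀, Matrix.mul_apply, Fin.sum_univ_three]

theorem Pmat_mul_self : Pmat * Pmat = 1 := by
  rw [Pmat_eq]
  ext i j
  fin_cases i <;> fin_cases j <;> simp [Matrix.mul_apply, Fin.sum_univ_three] <;>
    linear_combination (ε ^ 3 - 1) * ε_pow_three

theorem sigmaHat_eq (X : Matrix (Fin 3) (Fin 3) ℂ) : sigmaHat X = -(Pmat * Xᵀ * Pmat) := by
  rw [sigmaHat, Matrix.inv_eq_right_inv Pmat_mul_self]

theorem sigmaHat_add (X Y : Matrix (Fin 3) (Fin 3) ℂ) :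
    sigmaHat (X + Y) = sigmaHat X + sigmaHat Y := by
  simp only [sigmaHat, transpose_add, Matrix.mul_add, Matrix.add_mul, neg_add]

theorem sigmaHat_smul (c : ℂ) (X : Matrix (Fin 3) (Fin 3) ℂ) :
    sigmaHat (c • X) = c • sigmaHat X := by
  simp only [sigmaHat, transpose_smul, Matrix.mul_smul, Matrix.smul_mul, smul_neg]

theorem sigmaHat_commutator (X Y : Matrix (Fin 3) (Fin 3) ℂ) :
    sigmaHat (X * Y - Y * X) = sigmaHat X * sigmaHat Y - sigmaHat Y * sigmaHat X := by
  simp only [sigmaHat_eq]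
  exact neg_conj_transpose_commutator Pmat_mul_self X Y

theorem trace_sigmaHat (X : Matrix (Fin 3) (Fin 3) ℂ) : (sigmaHat X).trace = -X.trace := by
  rw [sigmaHat_eq, trace_neg, trace_conj_transpose Pmat_mul_self]

theorem sigmaHat_sigmaHat (X : Matrix (Fin 3) (Fin 3) ℂ) :
    sigmaHat (sigmaHat X) = diagonal ![ε ^ 4, ε ^ 2, 1] * X * diagonal ![ε ^ 2, ε ^ 4, 1] := by
  have ε_pow_eight : ε ^ 8 = ε ^ 2 := by linear_combination (ε ^ 5 - ε ^ 2) * ε_pow_three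
  have hPPt : Pmat * Pmatᵀ = diagonal ![ε ^ 4, ε ^ 2, 1] := by
    rw [Pmat_eq]
    ext i j
    fin_cases i <;> fin_cases j <;>
      simp [Matrix.mul_apply, Fin.sum_univ_three, ← pow_add, ε_pow_eight]
  have hPtP : Pmatᵀ * Pmat = diagonal ![ε ^ 2, ε ^ 4, 1] := by
    rw [Pmat_eq]
    ext i j
    fin_cases i <;> fin_cases j <;>
      simp [Matrix.mul_apply, Fin.sum_univ_three, ← pow_add, ε_pow_eight]
  rw [sigmaHat_eq, sigmaHat_eq, neg_conj_transpose_neg_conj_transpose, hPPt, hPtP]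

theorem sigmaHat_single : sigmaHat (single 0 1 1) = ε • single 0 1 1 := by
  rw [sigmaHat_eq, Pmat_eq, transpose_single]
  ext i j
  simp only [Matrix.neg_apply, Matrix.smul_apply, Matrix.mul_apply, Fin.sum_univ_three,
    single_apply]
  fin_cases i <;> fin_cases j <;> simp
  linear_combination (-ε) * ε_pow_three

theorem sigmaHat_iterate_six (X : Matrix (Fin 3) (Fin 3) ℂ) : sigmaHat^[6] X = X := by
  have cube_eq_one : ∀ a b : ℕ, ![ε ^ (2 * a), ε ^ (2 * b), 1] ^ 3 = 1 := by
    intro a b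
    ext i
    fin_cases i <;> simp [← pow_mul, ε_isPrimitiveRoot.pow_eq_one_iff_dvd]
    exacts [⟨a, by ring⟩, ⟨b, by ring⟩]
  have sq_eq :
      sigmaHat^[2] = fun Y => diagonal ![ε ^ 4, ε ^ 2, 1] * Y * diagonal ![ε ^ 2, ε ^ 4, 1] :=
    funext sigmaHat_sigmaHat
  rw [show 6 = 2 * 3 from rfl, Function.iterate_mul, sq_eq, Function.iterate_mul_mul_apply,
    diagonal_pow, diagonal_pow, cube_eq_one 2 1, cube_eq_one 1 2,
    diagonal_one', Matrix.one_mul, Matrix.mul_one]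

theorem sigmaHat_iterate_single_ne {n : ℕ} (hn0 : n ≠ 0) (hn6 : n < 6) :
    sigmaHat^[n] (single 0 1 1) ≠ single 0 1 1 := by
  rw [Function.iterate_apply_of_apply_eq_smul sigmaHat_smul sigmaHat_single]
  intro h
  have h01 := congr_fun (congr_fun h 0) 1
  simp only [Matrix.smul_apply, single_apply_same, smul_eq_mul, mul_one] at h01
  exact ε_isPrimitiveRoot.pow_ne_one_of_pos_of_lt hn0 hn6 h01

/-- `σ̂` is a Lie algebra automorphism of `sl(3,ℂ)` of order exactly 6. -/
theorem stmt0 :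
    (∀ X Y : Matrix (Fin 3) (Fin 3) ℂ, sigmaHat (X + Y) = sigmaHat X + sigmaHat Y) ∧
    (∀ (c : ℂ) (X : Matrix (Fin 3) (Fin 3) ℂ), sigmaHat (c • X) = c • sigmaHat X) ∧
    (∀ X Y : Matrix (Fin 3) (Fin 3) ℂ,
      sigmaHat (X * Y - Y * X) = sigmaHat X * sigmaHat Y - sigmaHat Y * sigmaHat X) ∧
    (∀ X : Matrix (Fin 3) (Fin 3) ℂ, X.trace = 0 → (sigmaHat X).trace = 0) ∧
    Function.Bijective sigmaHat ∧
    (∀ X : Matrix (Fin 3) (Fin 3) ℂ, sigmaHat^[6] X = X) ∧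
    (∀ n : ℕ, 0 < n → n < 6 →
      ∃ X : Matrix (Fin 3) (Fin 3) ℂ, X.trace = 0 ∧ sigmaHat^[n] X ≠ X) := by
  refine ⟨sigmaHat_add, sigmaHat_smul, sigmaHat_commutator, fun X hX => ?_,
    Function.bijective_of_iterate_succ_eq_id (funext sigmaHat_iterate_six), sigmaHat_iterate_six,
    fun n hn0 hn6 => ⟨single 0 1 1, trace_single_eq_of_ne _ _ _ (by decide), ?_⟩⟩
  · rw [trace_sigmaHat, hX, neg_zero]
  · exact sigmaHat_iterate_single_ne hn0.ne' hn6
end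
end

section
/- The anti-linear map τ(X) = -X̄ᵀ on sl(3,ℂ) commutes with the automorphism σ̂(X) = -P X^T P⁻¹, where P = diag(ε²,ε⁴,-1)·P₀. -/
open Matrix Complex

noncomputable section

/-- `τ(X) = -X̄ᵀ`, the compact real form involution. -/
def tauC (X : Matrix (Fin 3) (Fin 3) ℂ) : Matrix (Fin 3) (Fin 3) ℂ :=
  -((X.map (starRingEnd ℂ))ᵀ)

/-! Both `P₀` and the diagonal factor of `P` are unitary (`|ε| = 1`), so `P⁻¹ = Pᴴ`, and then
both sides equal `P X̄ Pᴴ`. -/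

theorem ε_mem_unitary : ε ∈ unitary ℂ := by
  rw [Unitary.mem_iff_star_mul_self, RCLike.star_def, RCLike.conj_mul, ε,
    show (Real.pi : ℂ) * I / 3 = ((Real.pi / 3 : ℝ) : ℂ) * I by push_cast; ring,
    norm_exp_ofReal_mul_I]
  norm_num

namespace Matrix

variable {m n R : Type*} [Fintype n]

theorem conjTranspose_mul_transpose_mul_conjTranspose [CommSemiring R] [StarRing R]
    (U : Matrix m n R) (X : Matrix n n R) : (U * Xᵀ * Uᴴ)ᴴ = U * X.map star * Uᴴ := by
  rw [conjTranspose_mul, conjTranspose_mul, conjTranspose_conjTranspose, transpose_conjTranspose,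
    Matrix.mul_assoc]

variable [DecidableEq n] [CommRing R] [StarRing R]

theorem diagonal_mem_unitary {d : n → R} (hd : ∀ i, d i ∈ unitary R) :
    diagonal d ∈ unitary (Matrix n n R) := by
  rw [mem_unitaryGroup_iff', star_eq_conjTranspose, diagonal_conjTranspose,
    diagonal_mul_diagonal, ← diagonal_one]
  exact congrArg diagonal (funext fun i => Unitary.star_mul_self_of_mem (hd i))

theorem inv_eq_conjTranspose_of_mem_unitary {U : Matrix n n R}
    (hU : U ∈ unitary (Matrix n n R)) : U⁻¹ = Uᴴ :=
  inv_eq_left_inv (Unitary.star_mul_self_of_mem hU)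

end Matrix

theorem P₀_mem_unitary : P₀ ∈ unitary (Matrix (Fin 3) (Fin 3) ℂ) := by
  rw [mem_unitaryGroup_iff', star_eq_conjTranspose]
  ext i j
  fin_cases i <;> fin_cases j <;> simp [P₀, mul_apply, Fin.sum_univ_succ]

theorem Pmat_mem_unitary : Pmat ∈ unitary (Matrix (Fin 3) (Fin 3) ℂ) := by
  refine Submonoid.mul_mem _ (diagonal_mem_unitary fun i => ?_) P₀_mem_unitary
  fin_cases i
  · exact pow_mem ε_mem_unitary 2
  · exact pow_mem ε_mem_unitary 4
  · exact (-1 : unitary ℂ).2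

theorem tauC_eq_neg_conjTranspose (X : Matrix (Fin 3) (Fin 3) ℂ) : tauC X = -Xᴴ := rfl

/-- The anti-linear involution `τ(X) = -X̄ᵀ` commutes with `σ̂`. -/
theorem stmt2 : ∀ X : Matrix (Fin 3) (Fin 3) ℂ, sigmaHat (tauC X) = tauC (sigmaHat X) := by
  intro X
  have hinv : Pmat⁻¹ = Pmatᴴ := inv_eq_conjTranspose_of_mem_unitary Pmat_mem_unitary
  calc sigmaHat (tauC X) = Pmat * X.map star * Pmatᴴ := by
        simp only [sigmaHat, tauC_eq_neg_conjTranspose, hinv, transpose_neg,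
          conjTranspose_transpose, mul_neg, neg_mul, neg_neg]
    _ = tauC (sigmaHat X) := by
        rw [tauC_eq_neg_conjTranspose, sigmaHat, hinv, conjTranspose_neg, neg_neg,
          conjTranspose_mul_transpose_mul_conjTranspose]
end
end
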